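/- Let Π be a C² projection-valued function with Π·∂Π = 0, let u be a real C² function, and let ξ = Πh with ∂h = 0. Set B = B(u(z)) for a C² function B : ℝ → ℝ. Then Δ(B(u)·‖ξ‖²) = B'(u)·Δu·‖ξ‖² + [B''(u)|∂u|²‖ξ‖² + 2Re(B'(u)·∂u·⟨∂̄ξ, ξ⟩) + B(u)‖∂̄ξ‖²] − B(u)·‖(∂Π)ξ‖², where Δ = ∂∂̄. -/

import Mathlib

open Complex
open scoped InnerProductSpace

/-- Wirtinger derivative `∂ = ½(∂/∂x − i·∂/∂y)`. -/
noncomputable def wD {F : Type*} [NormedAddCommGroup F] [NormedSpace ℂ F]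
    (f : ℂ → F) (z : ℂ) : F :=
  (2:ℂ)⁻¹ • (fderiv ℝ f z 1 - Complex.I • fderiv ℝ f z Complex.I)

/-- Conjugate Wirtinger derivative `∂̄ = ½(∂/∂x + i·∂/∂y)`. -/
noncomputable def wDb {F : Type*} [NormedAddCommGroup F] [NormedSpace ℂ F]
    (f : ℂ → F) (z : ℂ) : F :=
  (2:ℂ)⁻¹ • (fderiv ℝ f z 1 + Complex.I • fderiv ℝ f z Complex.I)

/-- Normalized Laplacian `Δ = ∂∂̄`. -/
noncomputable def lap {F : Type*} [NormedAddCommGroup F] [NormedSpace ℂ F]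
    (f : ℂ → F) (z : ℂ) : F :=
  wD (fun w => wDb f w) z

lemma csmul_decomp {E : Type*} [AddCommGroup E] [Module ℂ E] (c : ℂ) (x : E) :
    c • x = c.re • x + c.im • (Complex.I • x) := by
  conv_lhs => rw [← Complex.re_add_im c]
  rw [add_smul, mul_smul, Complex.coe_smul, Complex.coe_smul]

lemma half_smul {E : Type*} [AddCommGroup E] [Module ℂ E] (x : E) :
    (2:ℂ)⁻¹ • x = (2:ℝ)⁻¹ • x := by
  rw [← Complex.coe_smul]; norm_num

section bilin
variable {E F G : Type*} [NormedAddCommGroup E] [NormedSpace ℂ E]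
  [NormedAddCommGroup F] [NormedSpace ℂ F]
  [NormedAddCommGroup G] [NormedSpace ℂ G]
  {b : E × F → G} {f : ℂ → E} {g : ℂ → F} {z : ℂ}

lemma fderiv_bilin (hb : IsBoundedBilinearMap ℝ b)
    (hf : DifferentiableAt ℝ f z) (hg : DifferentiableAt ℝ g z) (v : ℂ) :
    fderiv ℝ (fun w => b (f w, g w)) z v
      = b (fderiv ℝ f z v, g z) + b (f z, fderiv ℝ g z v) := by
  have h1 : HasFDerivAt (fun w => b (f w, g w))
      ((hb.deriv (f z, g z)).comp ((fderiv ℝ f z).prod (fderiv ℝ g z))) z :=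
    (hb.hasFDerivAt (f z, g z)).comp z (hf.hasFDerivAt.prodMk hg.hasFDerivAt)
  rw [h1.fderiv]
  simp [IsBoundedBilinearMap.deriv_apply]
  abel

section
variable (hb : IsBoundedBilinearMap ℝ b)
include hb

lemma bilin_sub_left (x x' : E) (y : F) : b (x - x', y) = b (x, y) - b (x', y) := by
  have := hb.add_left (x - x') x' y
  rw [sub_add_cancel] at this
  exact eq_sub_of_add_eq this.symm

lemma bilin_sub_right (x : E) (y y' : F) : b (x, y - y') = b (x, y) - b (x, y') := by
  have := hb.add_right x (y - y') y'
  rw [sub_add_cancel] at this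
  exact eq_sub_of_add_eq this.symm

lemma bilin_half_left (x : E) (y : F) : b ((2:ℂ)⁻¹ • x, y) = (2:ℂ)⁻¹ • b (x, y) := by
  rw [half_smul, hb.smul_left, half_smul]

lemma bilin_half_right (x : E) (y : F) : b (x, (2:ℂ)⁻¹ • y) = (2:ℂ)⁻¹ • b (x, y) := by
  rw [half_smul, hb.smul_right, half_smul]

lemma wD_bilin
    (h1 : ∀ x y, b (Complex.I • x, y) = Complex.I • b (x, y))
    (h2 : ∀ x y, b (x, Complex.I • y) = Complex.I • b (x, y))
    (hf : DifferentiableAt ℝ f z) (hg : DifferentiableAt ℝ g z) :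
    wD (fun w => b (f w, g w)) z = b (wD f z, g z) + b (f z, wD g z) := by
  unfold wD
  rw [fderiv_bilin hb hf hg, fderiv_bilin hb hf hg,
    bilin_half_left hb, bilin_half_right hb, bilin_sub_left hb, bilin_sub_right hb, h1, h2]
  module

lemma wDb_bilin
    (h1 : ∀ x y, b (Complex.I • x, y) = Complex.I • b (x, y))
    (h2 : ∀ x y, b (x, Complex.I • y) = Complex.I • b (x, y))
    (hf : DifferentiableAt ℝ f z) (hg : DifferentiableAt ℝ g z) :
    wDb (fun w => b (f w, g w)) z = b (wDb f z, g z) + b (f z, wDb g z) := by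
  unfold wDb
  rw [fderiv_bilin hb hf hg, fderiv_bilin hb hf hg,
    bilin_half_left hb, bilin_half_right hb, hb.add_left, hb.add_right, h1, h2]
  module

lemma wD_sesq
    (h1 : ∀ x y, b (Complex.I • x, y) = -(Complex.I • b (x, y)))
    (h2 : ∀ x y, b (x, Complex.I • y) = Complex.I • b (x, y))
    (hf : DifferentiableAt ℝ f z) (hg : DifferentiableAt ℝ g z) :
    wD (fun w => b (f w, g w)) z = b (wDb f z, g z) + b (f z, wD g z) := by
  unfold wD wDb
  rw [fderiv_bilin hb hf hg, fderiv_bilin hb hf hg,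
    bilin_half_left hb, bilin_half_right hb, hb.add_left, bilin_sub_right hb, h1, h2]
  module

lemma wDb_sesq
    (h1 : ∀ x y, b (Complex.I • x, y) = -(Complex.I • b (x, y)))
    (h2 : ∀ x y, b (x, Complex.I • y) = Complex.I • b (x, y))
    (hf : DifferentiableAt ℝ f z) (hg : DifferentiableAt ℝ g z) :
    wDb (fun w => b (f w, g w)) z = b (wD f z, g z) + b (f z, wDb g z) := by
  unfold wD wDb
  rw [fderiv_bilin hb hf hg, fderiv_bilin hb hf hg,
    bilin_half_left hb, bilin_half_right hb, bilin_sub_left hb, hb.add_right, h1, h2]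
  module
end
end bilin

section basic
variable {F G : Type*} [NormedAddCommGroup F] [NormedSpace ℂ F]
  [NormedAddCommGroup G] [NormedSpace ℂ G] {f g : ℂ → F} {z : ℂ}

lemma wD_congr (h : f =ᶠ[nhds z] g) : wD f z = wD g z := by
  unfold wD; rw [h.fderiv_eq]

lemma wDb_congr (h : f =ᶠ[nhds z] g) : wDb f z = wDb g z := by
  unfold wDb; rw [h.fderiv_eq]

lemma wD_add (hf : DifferentiableAt ℝ f z) (hg : DifferentiableAt ℝ g z) :
    wD (fun w => f w + g w) z = wD f z + wD g z := by
  unfold wD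
  rw [fderiv_fun_add hf hg]
  simp only [ContinuousLinearMap.add_apply]
  module

lemma wDb_add (hf : DifferentiableAt ℝ f z) (hg : DifferentiableAt ℝ g z) :
    wDb (fun w => f w + g w) z = wDb f z + wDb g z := by
  unfold wDb
  rw [fderiv_fun_add hf hg]
  simp only [ContinuousLinearMap.add_apply]
  module

lemma wD_const (c : F) : wD (fun _ => c) z = 0 := by
  unfold wD; simp

lemma wD_eventually_zero (h : f =ᶠ[nhds z] fun _ => (0:F)) : wD f z = 0 := by
  rw [wD_congr h, wD_const]

lemma wDb_eventually_zero (h : f =ᶠ[nhds z] fun _ => (0:F)) : wDb f z = 0 := by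
  rw [wDb_congr h]; unfold wDb; simp

end basic


section concrete
variable {H : Type*} [NormedAddCommGroup H] [InnerProductSpace ℂ H]

lemma bb_mul : IsBoundedBilinearMap ℝ fun p : ℂ × ℂ => p.1 * p.2 := by
  simp_rw [← smul_eq_mul]; exact isBoundedBilinearMap_smul

lemma bb_inner : IsBoundedBilinearMap ℝ fun p : H × H => (inner ℂ p.1 p.2 : ℂ) :=
  isBoundedBilinearMap_inner (𝕜 := ℂ)

lemma bb_apply : IsBoundedBilinearMap ℝ fun p : (H →L[ℂ] H) × H => p.1 p.2 where
  add_left A B x := by simp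
  smul_left c A x := by simp
  add_right A x y := by simp
  smul_right c A x := by simp
  bound := ⟨1, zero_lt_one, fun A x => by simpa using A.le_opNorm x⟩

lemma bb_comp : IsBoundedBilinearMap ℝ fun p : (H →L[ℂ] H) × (H →L[ℂ] H) => p.1 ∘L p.2 where
  add_left A B C := by ext x; simp
  smul_left c A B := by ext x; simp
  add_right A B C := by ext x; simp
  smul_right c A B := by ext x; simp
  bound := ⟨1, zero_lt_one, fun A B => by simpa using A.opNorm_comp_le B⟩

-- multiplication rules
lemma wD_mul {f g : ℂ → ℂ} {z : ℂ} (hf : DifferentiableAt ℝ f z)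
    (hg : DifferentiableAt ℝ g z) :
    wD (fun w => f w * g w) z = wD f z * g z + f z * wD g z := by
  simpa using wD_bilin bb_mul (fun x y => by simp [smul_eq_mul]; ring)
    (fun x y => by simp [smul_eq_mul]; ring) hf hg

lemma wDb_mul {f g : ℂ → ℂ} {z : ℂ} (hf : DifferentiableAt ℝ f z)
    (hg : DifferentiableAt ℝ g z) :
    wDb (fun w => f w * g w) z = wDb f z * g z + f z * wDb g z := by
  simpa using wDb_bilin bb_mul (fun x y => by simp [smul_eq_mul]; ring)
    (fun x y => by simp [smul_eq_mul]; ring) hf hg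

-- application rules
lemma wD_apply {A : ℂ → H →L[ℂ] H} {v : ℂ → H} {z : ℂ}
    (hA : DifferentiableAt ℝ A z) (hv : DifferentiableAt ℝ v z) :
    wD (fun w => A w (v w)) z = wD A z (v z) + A z (wD v z) := by
  simpa using wD_bilin bb_apply (fun x y => by simp) (fun x y => by simp) hA hv

lemma wDb_apply {A : ℂ → H →L[ℂ] H} {v : ℂ → H} {z : ℂ}
    (hA : DifferentiableAt ℝ A z) (hv : DifferentiableAt ℝ v z) :
    wDb (fun w => A w (v w)) z = wDb A z (v z) + A z (wDb v z) := by
  simpa using wDb_bilin bb_apply (fun x y => by simp) (fun x y => by simp) hA hv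

-- composition rules
lemma wD_comp' {A B : ℂ → H →L[ℂ] H} {z : ℂ}
    (hA : DifferentiableAt ℝ A z) (hB : DifferentiableAt ℝ B z) :
    wD (fun w => A w ∘L B w) z = wD A z ∘L B z + A z ∘L wD B z := by
  simpa using wD_bilin bb_comp (fun x y => by ext v; simp) (fun x y => by ext v; simp) hA hB

lemma wDb_comp' {A B : ℂ → H →L[ℂ] H} {z : ℂ}
    (hA : DifferentiableAt ℝ A z) (hB : DifferentiableAt ℝ B z) :
    wDb (fun w => A w ∘L B w) z = wDb A z ∘L B z + A z ∘L wDb B z := by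
  simpa using wDb_bilin bb_comp (fun x y => by ext v; simp) (fun x y => by ext v; simp) hA hB

-- inner product rules (inner is conjugate-linear in the first slot)
open scoped InnerProductSpace in
lemma wD_inner {f g : ℂ → H} {z : ℂ}
    (hf : DifferentiableAt ℝ f z) (hg : DifferentiableAt ℝ g z) :
    wD (fun w => (⟪f w, g w⟫_ℂ)) z = ⟪wDb f z, g z⟫_ℂ + ⟪f z, wD g z⟫_ℂ := by
  simpa using wD_sesq bb_inner
    (fun x y => by simp [inner_smul_left]; ring) (fun x y => by simp [inner_smul_right]) hf hg

open scoped InnerProductSpace in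
lemma wDb_inner {f g : ℂ → H} {z : ℂ}
    (hf : DifferentiableAt ℝ f z) (hg : DifferentiableAt ℝ g z) :
    wDb (fun w => (⟪f w, g w⟫_ℂ)) z = ⟪wD f z, g z⟫_ℂ + ⟪f z, wDb g z⟫_ℂ := by
  simpa using wDb_sesq bb_inner
    (fun x y => by simp [inner_smul_left]; ring) (fun x y => by simp [inner_smul_right]) hf hg

end concrete

section derivs
variable {F : Type*} [NormedAddCommGroup F] [NormedSpace ℂ F]
  {f : ℂ → F} {U : Set ℂ} {z : ℂ}

lemma diffAt_of_C2 {G : Type*} [NormedAddCommGroup G] [NormedSpace ℝ G] {f : ℂ → G}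
    {U : Set ℂ} {z : ℂ} (hf : ContDiffOn ℝ 2 f U) (hU : IsOpen U) (hz : z ∈ U) :
    DifferentiableAt ℝ f z :=
  (hf.contDiffAt (hU.mem_nhds hz)).differentiableAt two_ne_zero

lemma fderiv_diffAt_of_C2 (hf : ContDiffOn ℝ 2 f U) (hU : IsOpen U) (hz : z ∈ U) :
    DifferentiableAt ℝ (fderiv ℝ f) z := by
  have h1 : ContDiffOn ℝ 1 (fderiv ℝ f) U := hf.fderiv_of_isOpen hU (by norm_num)
  exact ((h1.contDiffAt (hU.mem_nhds hz)).differentiableAt one_ne_zero)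

lemma eval_diffAt (hf : ContDiffOn ℝ 2 f U) (hU : IsOpen U) (hz : z ∈ U) (v : ℂ) :
    DifferentiableAt ℝ (fun w => fderiv ℝ f w v) z :=
  (ContinuousLinearMap.apply ℝ F v).differentiableAt.comp z (fderiv_diffAt_of_C2 hf hU hz)

lemma wD_diffAt (hf : ContDiffOn ℝ 2 f U) (hU : IsOpen U) (hz : z ∈ U) :
    DifferentiableAt ℝ (fun w => wD f w) z := by
  unfold wD
  exact (((eval_diffAt hf hU hz 1).sub
    ((eval_diffAt hf hU hz Complex.I).const_smul Complex.I)).const_smul ((2:ℂ)⁻¹))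

lemma wDb_diffAt (hf : ContDiffOn ℝ 2 f U) (hU : IsOpen U) (hz : z ∈ U) :
    DifferentiableAt ℝ (fun w => wDb f w) z := by
  unfold wDb
  exact (((eval_diffAt hf hU hz 1).add
    ((eval_diffAt hf hU hz Complex.I).const_smul Complex.I)).const_smul ((2:ℂ)⁻¹))

lemma fderiv_eval (hf' : DifferentiableAt ℝ (fderiv ℝ f) z) (v u : ℂ) :
    fderiv ℝ (fun w => fderiv ℝ f w v) z u = fderiv ℝ (fderiv ℝ f) z u v := by
  rw [fderiv_clm_apply hf' (differentiableAt_const v)]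
  simp

/-- Mixed Wirtinger derivatives commute for `C²` functions. -/
lemma wD_wDb_comm (hf : ContDiffOn ℝ 2 f U) (hU : IsOpen U) (hz : z ∈ U) :
    wD (fun w => wDb f w) z = wDb (fun w => wD f w) z := by
  have hf' : DifferentiableAt ℝ (fderiv ℝ f) z := fderiv_diffAt_of_C2 hf hU hz
  have hev : ∀ᶠ y in nhds z, HasFDerivAt f (fderiv ℝ f y) y := by
    filter_upwards [hU.mem_nhds hz] with y hy
    exact (diffAt_of_C2 hf hU hy).hasFDerivAt
  have symm := second_derivative_symmetric_of_eventually_of_real hev hf'.hasFDerivAt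
  have L : ∀ u : ℂ, fderiv ℝ (fun w => wDb f w) z u
      = (2:ℂ)⁻¹ • (fderiv ℝ (fderiv ℝ f) z u 1
        + Complex.I • fderiv ℝ (fderiv ℝ f) z u Complex.I) := by
    intro u
    have heq : (fun w => wDb f w)
        = fun w => (2:ℂ)⁻¹ • ((fun w => fderiv ℝ f w 1) w
          + Complex.I • (fun w => fderiv ℝ f w Complex.I) w) := rfl
    have d1 : DifferentiableAt ℝ (fun w => fderiv ℝ f w 1) z :=
      (ContinuousLinearMap.apply ℝ F (1:ℂ)).differentiableAt.comp z hf'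
    have dI : DifferentiableAt ℝ (fun w => fderiv ℝ f w Complex.I) z :=
      (ContinuousLinearMap.apply ℝ F (Complex.I)).differentiableAt.comp z hf'
    rw [heq, fderiv_fun_const_smul (by exact d1.add (dI.const_smul Complex.I)) ((2:ℂ)⁻¹),
      fderiv_fun_add d1 (by exact dI.const_smul Complex.I : DifferentiableAt ℝ (fun w => Complex.I • fderiv ℝ f w Complex.I) z), fderiv_fun_const_smul dI Complex.I]
    simp only [ContinuousLinearMap.smul_apply, ContinuousLinearMap.add_apply]
    rw [fderiv_eval hf' 1 u, fderiv_eval hf' Complex.I u]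
  have R : ∀ u : ℂ, fderiv ℝ (fun w => wD f w) z u
      = (2:ℂ)⁻¹ • (fderiv ℝ (fderiv ℝ f) z u 1
        - Complex.I • fderiv ℝ (fderiv ℝ f) z u Complex.I) := by
    intro u
    have heq : (fun w => wD f w)
        = fun w => (2:ℂ)⁻¹ • ((fun w => fderiv ℝ f w 1) w
          - Complex.I • (fun w => fderiv ℝ f w Complex.I) w) := rfl
    have d1 : DifferentiableAt ℝ (fun w => fderiv ℝ f w 1) z :=
      (ContinuousLinearMap.apply ℝ F (1:ℂ)).differentiableAt.comp z hf'
    have dI : DifferentiableAt ℝ (fun w => fderiv ℝ f w Complex.I) z :=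
      (ContinuousLinearMap.apply ℝ F (Complex.I)).differentiableAt.comp z hf'
    rw [heq, fderiv_fun_const_smul (by exact d1.sub (dI.const_smul Complex.I)) ((2:ℂ)⁻¹),
      fderiv_fun_sub d1 (by exact dI.const_smul Complex.I : DifferentiableAt ℝ (fun w => Complex.I • fderiv ℝ f w Complex.I) z), fderiv_fun_const_smul dI Complex.I]
    simp only [ContinuousLinearMap.smul_apply, ContinuousLinearMap.sub_apply]
    rw [fderiv_eval hf' 1 u, fderiv_eval hf' Complex.I u]
  show (2:ℂ)⁻¹ • (fderiv ℝ (fun w => wDb f w) z 1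
      - Complex.I • fderiv ℝ (fun w => wDb f w) z Complex.I)
    = (2:ℂ)⁻¹ • (fderiv ℝ (fun w => wD f w) z 1
      + Complex.I • fderiv ℝ (fun w => wD f w) z Complex.I)
  rw [L 1, L Complex.I, R 1, R Complex.I, symm 1 Complex.I]
  module

end derivs

section realstuff
variable {g u : ℂ → ℝ} {z : ℂ}

lemma ofReal_diffAt (hg : DifferentiableAt ℝ g z) :
    DifferentiableAt ℝ (fun w => ((g w : ℝ) : ℂ)) z :=
  Complex.ofRealCLM.differentiableAt.comp z hg

lemma fderiv_ofReal_comp (hg : DifferentiableAt ℝ g z) (v : ℂ) :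
    fderiv ℝ (fun w => ((g w : ℝ) : ℂ)) z v = ((fderiv ℝ g z v : ℝ) : ℂ) := by
  have : fderiv ℝ (fun w => ((g w : ℝ) : ℂ)) z = Complex.ofRealCLM.comp (fderiv ℝ g z) :=
    (Complex.ofRealCLM.hasFDerivAt.comp z hg.hasFDerivAt).fderiv
  rw [this]; rfl

lemma wD_ofReal (hg : DifferentiableAt ℝ g z) :
    wD (fun w => ((g w : ℝ) : ℂ)) z
      = (2:ℂ)⁻¹ * (((fderiv ℝ g z 1 : ℝ) : ℂ) - Complex.I * ((fderiv ℝ g z Complex.I : ℝ) : ℂ)) := by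
  unfold wD
  rw [fderiv_ofReal_comp hg, fderiv_ofReal_comp hg]
  simp [smul_eq_mul]

lemma wDb_ofReal (hg : DifferentiableAt ℝ g z) :
    wDb (fun w => ((g w : ℝ) : ℂ)) z
      = (2:ℂ)⁻¹ * (((fderiv ℝ g z 1 : ℝ) : ℂ) + Complex.I * ((fderiv ℝ g z Complex.I : ℝ) : ℂ)) := by
  unfold wDb
  rw [fderiv_ofReal_comp hg, fderiv_ofReal_comp hg]
  simp [smul_eq_mul]

lemma wDb_ofReal_conj (hg : DifferentiableAt ℝ g z) :
    wDb (fun w => ((g w : ℝ) : ℂ)) z = starRingEnd ℂ (wD (fun w => ((g w : ℝ) : ℂ)) z) := by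
  rw [wD_ofReal hg, wDb_ofReal hg]
  simp only [map_mul, map_sub, Complex.conj_ofReal, Complex.conj_I]
  push_cast
  ring_nf
  simp [Complex.ext_iff]

lemma fderiv_real_comp (hu : DifferentiableAt ℝ u z) {B : ℝ → ℝ}
    (hB : DifferentiableAt ℝ B (u z)) (v : ℂ) :
    fderiv ℝ (fun w => B (u w)) z v = deriv B (u z) * fderiv ℝ u z v := by
  have h1 : fderiv ℝ (fun w => B (u w)) z = (fderiv ℝ B (u z)).comp (fderiv ℝ u z) :=
    fderiv_comp z hB hu
  rw [h1]
  have h2 : ∀ r : ℝ, fderiv ℝ B (u z) r = r * deriv B (u z) := by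
    intro r
    rw [← fderiv_apply_one_eq_deriv]
    calc fderiv ℝ B (u z) r = fderiv ℝ B (u z) (r • (1:ℝ)) := by norm_num
      _ = r • fderiv ℝ B (u z) 1 := by rw [map_smul]
      _ = r * fderiv ℝ B (u z) 1 := rfl
  simp only [ContinuousLinearMap.comp_apply, h2]
  ring

lemma wD_chain (hu : DifferentiableAt ℝ u z) {B : ℝ → ℝ} (hB : DifferentiableAt ℝ B (u z)) :
    wD (fun w => ((B (u w) : ℝ) : ℂ)) z
      = ((deriv B (u z) : ℝ) : ℂ) * wD (fun w => ((u w : ℝ) : ℂ)) z := by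
  rw [wD_ofReal (g := fun w => B (u w)) (hB.comp z hu), wD_ofReal hu,
    fderiv_real_comp hu hB, fderiv_real_comp hu hB]
  push_cast
  ring

lemma wDb_chain (hu : DifferentiableAt ℝ u z) {B : ℝ → ℝ} (hB : DifferentiableAt ℝ B (u z)) :
    wDb (fun w => ((B (u w) : ℝ) : ℂ)) z
      = ((deriv B (u z) : ℝ) : ℂ) * wDb (fun w => ((u w : ℝ) : ℂ)) z := by
  rw [wDb_ofReal (g := fun w => B (u w)) (hB.comp z hu), wDb_ofReal hu,
    fderiv_real_comp hu hB, fderiv_real_comp hu hB]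
  push_cast
  ring

end realstuff

section subs
variable {F : Type*} [NormedAddCommGroup F] [NormedSpace ℂ F] {f g : ℂ → F} {z : ℂ}

lemma wD_sub (hf : DifferentiableAt ℝ f z) (hg : DifferentiableAt ℝ g z) :
    wD (fun w => f w - g w) z = wD f z - wD g z := by
  unfold wD
  rw [fderiv_fun_sub hf hg]
  simp only [ContinuousLinearMap.sub_apply]
  module

lemma wDb_sub (hf : DifferentiableAt ℝ f z) (hg : DifferentiableAt ℝ g z) :
    wDb (fun w => f w - g w) z = wDb f z - wDb g z := by
  unfold wDb
  rw [fderiv_fun_sub hf hg]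
  simp only [ContinuousLinearMap.sub_apply]
  module
end subs

section starstuff
variable {H : Type*} [NormedAddCommGroup H] [InnerProductSpace ℂ H] [CompleteSpace H]
  {P : ℂ → H →L[ℂ] H} {U : Set ℂ} {z : ℂ}

lemma star_fderiv_P (hU : IsOpen U) (hz : z ∈ U) (hP : DifferentiableAt ℝ P z)
    (hsa : ∀ w ∈ U, ContinuousLinearMap.adjoint (P w) = P w) (v : ℂ) :
    star (fderiv ℝ P z v) = fderiv ℝ P z v := by
  have hst : (fun w => star (P w)) =ᶠ[nhds z] P := by
    filter_upwards [hU.mem_nhds hz] with w hw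
    rw [ContinuousLinearMap.star_eq_adjoint, hsa w hw]
  set T := (starL' ℝ : (H →L[ℂ] H) ≃L[ℝ] (H →L[ℂ] H))
  have h3 : HasFDerivAt (fun w => star (P w))
      ((T : (H →L[ℂ] H) →L[ℝ] (H →L[ℂ] H)).comp (fderiv ℝ P z)) z :=
    (T : (H →L[ℂ] H) →L[ℝ] (H →L[ℂ] H)).hasFDerivAt.comp z hP.hasFDerivAt
  have h4 := h3.fderiv
  rw [hst.fderiv_eq] at h4
  calc star (fderiv ℝ P z v)
      = ((T : (H →L[ℂ] H) →L[ℝ] (H →L[ℂ] H)).comp (fderiv ℝ P z)) v := rfl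
    _ = fderiv ℝ P z v := by rw [← h4]

lemma star_wD_P (hU : IsOpen U) (hz : z ∈ U) (hP : DifferentiableAt ℝ P z)
    (hsa : ∀ w ∈ U, ContinuousLinearMap.adjoint (P w) = P w) :
    star (wD P z) = wDb P z := by
  unfold wD wDb
  rw [star_smul, star_sub, star_smul, star_fderiv_P hU hz hP hsa,
    star_fderiv_P hU hz hP hsa]
  simp [Complex.star_def, Complex.conj_I]

lemma adjoint_wD_P (hU : IsOpen U) (hz : z ∈ U) (hP : DifferentiableAt ℝ P z)
    (hsa : ∀ w ∈ U, ContinuousLinearMap.adjoint (P w) = P w) :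
    ContinuousLinearMap.adjoint (wD P z) = wDb P z := by
  rw [← ContinuousLinearMap.star_eq_adjoint, star_wD_P hU hz hP hsa]

end starstuff

section proj
variable {H : Type*} [NormedAddCommGroup H] [InnerProductSpace ℂ H] [CompleteSpace H]
  {P : ℂ → H →L[ℂ] H} {U : Set ℂ} {z : ℂ}

lemma comp_diffAt (hP : DifferentiableAt ℝ P z) (hQ : DifferentiableAt ℝ (Q : ℂ → H →L[ℂ] H) z) :
    DifferentiableAt ℝ (fun w => P w ∘L Q w) z :=
  by exact (bb_comp.differentiableAt (p := (P z, Q z))).comp z (hP.prodMk hQ)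

lemma K1 (hU : IsOpen U) (hz : z ∈ U) (hsm : ContDiffOn ℝ 2 P U)
    (hproj : ∀ w ∈ U, (P w) ∘L (P w) = P w) (hPdP : ∀ w ∈ U, (P w) ∘L (wD P w) = 0) :
    wD P z ∘L P z = wD P z := by
  have dP := diffAt_of_C2 hsm hU hz
  have hev : (fun w => P w ∘L P w - P w) =ᶠ[nhds z] (fun _ => (0 : H →L[ℂ] H)) := by
    filter_upwards [hU.mem_nhds hz] with w hw
    rw [hproj w hw, sub_self]
  have h0 : wD (fun w => P w ∘L P w - P w) z = 0 := wD_eventually_zero hev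
  rw [wD_sub (comp_diffAt dP dP) dP, wD_comp' dP dP, hPdP z hz, add_zero, sub_eq_zero] at h0
  exact h0

lemma K3 (hU : IsOpen U) (hz : z ∈ U) (hsm : ContDiffOn ℝ 2 P U)
    (hPdP : ∀ w ∈ U, (P w) ∘L (wD P w) = 0) :
    P z ∘L (wDb (fun w => wD P w) z) = -(wDb P z ∘L wD P z) := by
  have dP := diffAt_of_C2 hsm hU hz
  have dwDP : DifferentiableAt ℝ (fun w => wD P w) z := wD_diffAt hsm hU hz
  have hev : (fun w => P w ∘L wD P w) =ᶠ[nhds z] (fun _ => (0 : H →L[ℂ] H)) := by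
    filter_upwards [hU.mem_nhds hz] with w hw
    exact hPdP w hw
  have h0 : wDb (fun w => P w ∘L wD P w) z = 0 := wDb_eventually_zero hev
  rw [wDb_comp' dP dwDP] at h0
  linear_combination (norm := module) h0

end proj

lemma inner_self_ofReal {H : Type*} [NormedAddCommGroup H] [InnerProductSpace ℂ H] (x : H) :
    (⟪x, x⟫_ℂ) = ((‖x‖^2 : ℝ) : ℂ) := by
  rw [inner_self_eq_norm_sq_to_K]
  norm_cast

/-- the Laplacian identity
`Δ(B(u)‖ξ‖²) = B'(u)Δu‖ξ‖² + [B''(u)|∂u|²‖ξ‖² + 2Re(B'(u)∂u⟨∂̄ξ,ξ⟩) + B(u)‖∂̄ξ‖²]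
 − B(u)‖(∂Π)ξ‖²` for `ξ = Πh`, `∂h = 0`. -/
theorem stmt9 {H : Type*} [NormedAddCommGroup H] [InnerProductSpace ℂ H] [CompleteSpace H]
    (U : Set ℂ) (hU : IsOpen U) (P : ℂ → H →L[ℂ] H)
    (hsm : ContDiffOn ℝ 2 P U)
    (hproj : ∀ z ∈ U, (P z) ∘L (P z) = P z)
    (hsa : ∀ z ∈ U, ContinuousLinearMap.adjoint (P z) = P z)
    (hPdP : ∀ z ∈ U, (P z) ∘L (wD P z) = 0)
    (h : ℂ → H) (hh : ContDiffOn ℝ 2 h U)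
    (hanti : ∀ z ∈ U, wD h z = 0)
    (ξ : ℂ → H) (hξ : ∀ z, ξ z = P z (h z))
    (u : ℂ → ℝ) (hu : ContDiffOn ℝ 2 (fun z => u z) U)
    (B : ℝ → ℝ) (hB : ContDiff ℝ 2 B) :
    ∀ z ∈ U,
      lap (fun w => ((B (u w) * ‖ξ w‖^2 : ℝ) : ℂ)) z =
        ((deriv B (u z) : ℝ) : ℂ) * lap (fun w => ((u w : ℝ) : ℂ)) z * ((‖ξ z‖^2 : ℝ) : ℂ)
        + ((deriv (deriv B) (u z) * ‖wD (fun w => ((u w : ℝ) : ℂ)) z‖^2 * ‖ξ z‖^2 : ℝ) : ℂ)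
        + ((2 * (((deriv B (u z) : ℝ) : ℂ) * wD (fun w => ((u w : ℝ) : ℂ)) z
            * ⟪ξ z, wDb ξ z⟫_ℂ).re : ℝ) : ℂ)
        + ((B (u z) * ‖wDb ξ z‖^2 : ℝ) : ℂ)
        - ((B (u z) * ‖(wD P z) (ξ z)‖^2 : ℝ) : ℂ) := by
  intro z hz
  -- abbreviations
  set fB : ℂ → ℂ := fun w => ((B (u w) : ℝ) : ℂ) with hfBdef
  set gN : ℂ → ℂ := fun w => ((‖ξ w‖^2 : ℝ) : ℂ) with hgNdef
  set uC : ℂ → ℂ := fun w => ((u w : ℝ) : ℂ) with huCdef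
  -- smoothness of ξ
  have hξfun : ξ = fun w => P w (h w) := funext hξ
  have hξC2 : ContDiffOn ℝ 2 ξ U := by
    rw [hξfun]
    exact (bb_apply (H := H)).contDiff.comp_contDiffOn (hsm.prodMk hh)
  -- basic differentiability suppliers
  have dP : ∀ w ∈ U, DifferentiableAt ℝ P w := fun w hw => diffAt_of_C2 hsm hU hw
  have dh : ∀ w ∈ U, DifferentiableAt ℝ h w := fun w hw => diffAt_of_C2 hh hU hw
  have dξ : ∀ w ∈ U, DifferentiableAt ℝ ξ w := fun w hw => diffAt_of_C2 hξC2 hU hw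
  have du : ∀ w ∈ U, DifferentiableAt ℝ u w := fun w hw => diffAt_of_C2 hu hU hw
  have dB : ∀ x : ℝ, DifferentiableAt ℝ B x := fun x => (hB.differentiable two_ne_zero).differentiableAt
  -- deriv B is C¹
  have hB' : ContDiff ℝ 1 (deriv B) := by
    have h2 : ContDiff ℝ ((1:ℕ) + 1) B := by exact_mod_cast hB
    exact (contDiff_succ_iff_deriv.mp h2).2.2
  have dB' : ∀ x : ℝ, DifferentiableAt ℝ (deriv B) x :=
    fun x => (hB'.differentiable one_ne_zero).differentiableAt
  -- smoothness of the scalar factors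
  have hfB2 : ContDiffOn ℝ 2 fB U :=
    Complex.ofRealCLM.contDiff.comp_contDiffOn (hB.comp_contDiffOn hu)
  have hgInner : gN = fun w => ⟪ξ w, ξ w⟫_ℂ := by
    funext w
    simp only [hgNdef]
    rw [inner_self_ofReal]
  have hgN2 : ContDiffOn ℝ 2 gN U := by
    rw [hgInner]; exact hξC2.inner ℂ hξC2
  have huC2 : ContDiffOn ℝ 2 uC U := Complex.ofRealCLM.contDiff.comp_contDiffOn hu
  have dfB : DifferentiableAt ℝ fB z := diffAt_of_C2 hfB2 hU hz
  have dgN : DifferentiableAt ℝ gN z := diffAt_of_C2 hgN2 hU hz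
  -- projection identities pointwise
  have K1w : ∀ w ∈ U, wD P w ∘L P w = wD P w := fun w hw => K1 hU hw hsm hproj hPdP
  have Pinner : ∀ x y : H, ⟪P z x, y⟫_ℂ = ⟪x, P z y⟫_ℂ := by
    intro x y
    conv_lhs => rw [← hsa z hz]
    exact ContinuousLinearMap.adjoint_inner_left (P z) y x
  -- first derivatives of ξ
  have E1 : ∀ w ∈ U, wD ξ w = (wD P w) (h w) := by
    intro w hw
    rw [hξfun, wD_apply (dP w hw) (dh w hw), hanti w hw, map_zero, add_zero]
  have E1' : ∀ w ∈ U, wD ξ w = (wD P w) (ξ w) := by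
    intro w hw
    rw [E1 w hw, hξ w, ← ContinuousLinearMap.comp_apply, K1w w hw]
  have E3 : ∀ w ∈ U, ⟪wD ξ w, ξ w⟫_ℂ = 0 := by
    intro w hw
    have hP0 : (P w) ((wD P w) (h w)) = 0 := by
      rw [← ContinuousLinearMap.comp_apply, hPdP w hw, ContinuousLinearMap.zero_apply]
    have Pinw : ∀ x y : H, ⟪P w x, y⟫_ℂ = ⟪x, P w y⟫_ℂ := by
      intro x y
      conv_lhs => rw [← hsa w hw]
      exact ContinuousLinearMap.adjoint_inner_left (P w) y x
    rw [E1 w hw, hξ w, ← Pinw, hP0, inner_zero_left]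
  -- Step A2 : Laplacian of fB
  have wDfBz : wD fB z = ((deriv B (u z) : ℝ) : ℂ) * wD uC z := wD_chain (du z hz) (dB (u z))
  have wDbfBz : wDb fB z = ((deriv B (u z) : ℝ) : ℂ) * wDb uC z := wDb_chain (du z hz) (dB (u z))
  have hconj_u : wDb uC z = starRingEnd ℂ (wD uC z) := wDb_ofReal_conj (du z hz)
  have lapfB : lap fB z = ((deriv B (u z) : ℝ) : ℂ) * lap uC z
      + ((deriv (deriv B) (u z) : ℝ) : ℂ) * (wD uC z * wDb uC z) := by
    have hev : (fun w => wDb fB w) =ᶠ[nhds z]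
        (fun w => ((deriv B (u w) : ℝ) : ℂ) * wDb uC w) := by
      filter_upwards [hU.mem_nhds hz] with w hw
      exact wDb_chain (du w hw) (dB (u w))
    have d1 : DifferentiableAt ℝ (fun w => ((deriv B (u w) : ℝ) : ℂ)) z :=
      ofReal_diffAt ((dB' (u z)).comp z (du z hz))
    have d2 : DifferentiableAt ℝ (fun w => wDb uC w) z := wDb_diffAt huC2 hU hz
    show wD (fun w => wDb fB w) z = _
    rw [wD_congr hev, wD_mul d1 d2, wD_chain (du z hz) (dB' (u z))]
    show ((deriv (deriv B) (u z) : ℝ) : ℂ) * wD uC z * wDb uC z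
      + ((deriv B (u z) : ℝ) : ℂ) * lap uC z = _
    ring
  -- Step A3 : first derivatives of gN
  have wDbgN : ∀ w ∈ U, wDb gN w = ⟪wD ξ w, ξ w⟫_ℂ + ⟪ξ w, wDb ξ w⟫_ℂ := by
    intro w hw
    rw [hgInner]
    exact wDb_inner (dξ w hw) (dξ w hw)
  have wDbgNz : wDb gN z = ⟪ξ z, wDb ξ z⟫_ℂ := by
    rw [wDbgN z hz, E3 z hz, zero_add]
  have wDgNz : wD gN z = ⟪wDb ξ z, ξ z⟫_ℂ := by
    rw [hgInner, wD_inner (dξ z hz) (dξ z hz)]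
    have : ⟪ξ z, wD ξ z⟫_ℂ = 0 := by
      rw [← inner_conj_symm, E3 z hz, map_zero]
    rw [this, add_zero]
  -- Step A5 : Laplacian of gN
  have dwDξ : DifferentiableAt ℝ (fun w => wD ξ w) z := wD_diffAt hξC2 hU hz
  have dwDbξ : DifferentiableAt ℝ (fun w => wDb ξ w) z := wDb_diffAt hξC2 hU hz
  have dwDP : DifferentiableAt ℝ (fun w => wD P w) z := wD_diffAt hsm hU hz
  have hv : wD ξ z = (wD P z) (ξ z) := E1' z hz
  have lapgN : lap gN z = ((‖wDb ξ z‖^2 : ℝ) : ℂ) - ((‖(wD P z) (ξ z)‖^2 : ℝ) : ℂ) := by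
    have hev : (fun w => wDb gN w) =ᶠ[nhds z]
        (fun w => ⟪wD ξ w, ξ w⟫_ℂ + ⟪ξ w, wDb ξ w⟫_ℂ) := by
      filter_upwards [hU.mem_nhds hz] with w hw
      exact wDbgN w hw
    have d1 : DifferentiableAt ℝ (fun w => ⟪wD ξ w, ξ w⟫_ℂ) z := dwDξ.inner ℂ (dξ z hz)
    have d2 : DifferentiableAt ℝ (fun w => ⟪ξ w, wDb ξ w⟫_ℂ) z := (dξ z hz).inner ℂ dwDbξ
    have step1 : lap gN z = ⟪wDb (fun w => wD ξ w) z, ξ z⟫_ℂ + ⟪wD ξ z, wD ξ z⟫_ℂ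
        + (⟪wDb ξ z, wDb ξ z⟫_ℂ + ⟪ξ z, wD (fun w => wDb ξ w) z⟫_ℂ) := by
      show wD (fun w => wDb gN w) z = _
      rw [wD_congr hev, wD_add d1 d2, wD_inner dwDξ (dξ z hz), wD_inner (dξ z hz) dwDbξ]
    -- the mixed second derivative Λ
    have hcomm : wDb (fun w => wD ξ w) z = wD (fun w => wDb ξ w) z :=
      (wD_wDb_comm hξC2 hU hz).symm
    set Λ : H := wD (fun w => wDb ξ w) z with hΛ
    -- compute ⟪ξ z, Λ⟫
    have hΛ2 : Λ = (wDb (fun w => wD P w) z) (h z) + (wD P z) (wDb h z) := by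
      rw [← hcomm]
      have hev2 : (fun w => wD ξ w) =ᶠ[nhds z] (fun w => (wD P w) (h w)) := by
        filter_upwards [hU.mem_nhds hz] with w hw
        exact E1 w hw
      rw [wDb_congr hev2, wDb_apply dwDP (dh z hz)]
    have hterm2 : ⟪ξ z, (wD P z) (wDb h z)⟫_ℂ = 0 := by
      rw [hξ z, Pinner, ← ContinuousLinearMap.comp_apply, hPdP z hz,
        ContinuousLinearMap.zero_apply, inner_zero_right]
    have hQ : P z ∘L (wDb (fun w => wD P w) z) = -(wDb P z ∘L wD P z) := K3 hU hz hsm hPdP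
    have hadj : ContinuousLinearMap.adjoint (wD P z) = wDb P z :=
      adjoint_wD_P hU hz (dP z hz) hsa
    have hPξ : (wD P z) (h z) = (wD P z) (ξ z) := by
      rw [← E1 z hz, hv]
    have hterm1 : ⟪ξ z, (wDb (fun w => wD P w) z) (h z)⟫_ℂ
        = -((‖(wD P z) (ξ z)‖^2 : ℝ) : ℂ) := by
      calc ⟪ξ z, (wDb (fun w => wD P w) z) (h z)⟫_ℂ
          = ⟪h z, (P z ∘L wDb (fun w => wD P w) z) (h z)⟫_ℂ := by
            rw [hξ z, Pinner, ContinuousLinearMap.comp_apply]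
        _ = -⟪h z, (wDb P z) ((wD P z) (h z))⟫_ℂ := by
            rw [hQ]
            simp
        _ = -⟪(wD P z) (h z), (wD P z) (h z)⟫_ℂ := by
            rw [← hadj, ContinuousLinearMap.adjoint_inner_right]
        _ = -((‖(wD P z) (ξ z)‖^2 : ℝ) : ℂ) := by
            rw [hPξ, inner_self_ofReal]
    have hξΛ : ⟪ξ z, Λ⟫_ℂ = -((‖(wD P z) (ξ z)‖^2 : ℝ) : ℂ) := by
      rw [hΛ2, inner_add_right, hterm1, hterm2, add_zero]
    have hΛξ : ⟪Λ, ξ z⟫_ℂ = -((‖(wD P z) (ξ z)‖^2 : ℝ) : ℂ) := by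
      rw [← inner_conj_symm, hξΛ]
      simp
    rw [step1, hcomm, hξΛ, hΛξ, hv, inner_self_ofReal, inner_self_ofReal]
    ring
  -- Step A1 : product rule for the Laplacian
  have lapProd : lap (fun w => fB w * gN w) z
      = lap fB z * gN z + wDb fB z * wD gN z + wD fB z * wDb gN z + fB z * lap gN z := by
    have hev : (fun w => wDb (fun w' => fB w' * gN w') w) =ᶠ[nhds z]
        (fun w => wDb fB w * gN w + fB w * wDb gN w) := by
      filter_upwards [hU.mem_nhds hz] with w hw
      exact wDb_mul (diffAt_of_C2 hfB2 hU hw) (diffAt_of_C2 hgN2 hU hw)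
    have d1 : DifferentiableAt ℝ (fun w => wDb fB w) z := wDb_diffAt hfB2 hU hz
    have d2 : DifferentiableAt ℝ (fun w => wDb gN w) z := wDb_diffAt hgN2 hU hz
    show wD (fun w => wDb (fun w' => fB w' * gN w') w) z = _
    rw [wD_congr hev, wD_add (by exact d1.mul dgN : DifferentiableAt ℝ (fun w => wDb fB w * gN w) z) (by exact dfB.mul d2 : DifferentiableAt ℝ (fun w => fB w * wDb gN w) z), wD_mul d1 dgN, wD_mul dfB d2]
    show wD (fun w => wDb fB w) z * gN z + wDb fB z * wD gN z
      + (wD fB z * wDb gN z + fB z * wD (fun w => wDb gN w) z) = _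
    unfold lap
    ring
  -- the function in the statement is fB * gN
  have hFun : (fun w => ((B (u w) * ‖ξ w‖^2 : ℝ) : ℂ)) = fun w => fB w * gN w := by
    funext w
    rw [hfBdef, hgNdef]
    push_cast
    ring
  -- middle terms
  have hmid : wDb fB z * wD gN z + wD fB z * wDb gN z
      = ((2 * (((deriv B (u z) : ℝ) : ℂ) * wD uC z * ⟪ξ z, wDb ξ z⟫_ℂ).re : ℝ) : ℂ) := by
    set X : ℂ := ((deriv B (u z) : ℝ) : ℂ) * wD uC z * ⟪ξ z, wDb ξ z⟫_ℂ with hX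
    have h1 : wDb fB z * wD gN z = starRingEnd ℂ X := by
      rw [wDbfBz, hconj_u, wDgNz, hX]
      simp only [map_mul, Complex.conj_ofReal, inner_conj_symm]
    have h2 : wD fB z * wDb gN z = X := by
      rw [wDfBz, wDbgNz, hX]
    rw [h1, h2, add_comm, Complex.add_conj]
  -- |∂u|²
  have humod : wD uC z * wDb uC z = ((‖wD uC z‖^2 : ℝ) : ℂ) := by
    rw [hconj_u, Complex.mul_conj]
    simp [Complex.normSq_eq_norm_sq]
  -- assemble
  rw [hFun, lapProd, lapfB, lapgN, humod]
  have hgNz : gN z = ((‖ξ z‖^2 : ℝ) : ℂ) := rfl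
  have hfBz : fB z = ((B (u z) : ℝ) : ℂ) := rfl
  rw [hgNz, hfBz]
  push_cast at hmid ⊢
  linear_combination hmid
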